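/- arXiv:1410.1703 — 3 statements merged into one kernel-verified Lean document; each statement's English description precedes it below -/
import Mathlib

section
/- If y ∈ [0,1]^{I×J} satisfies Σ_{i∈I} y_{ij} ≤ 1 for every item j ∈ J, then F(y) ≥ (1 − 1/e)·Σ_{i∈I} Σ_{j∈J} v_{ij} y_{ij}. (The second inequality in the proof of Lemma 3.3, i.e., F dominates a (1−1/e) fraction of the linear objective on the polytope P′.) -/
/-!
Fix an item `j` and list the bins in the order `σ_j`, writing `a_i` for the sorted values and
`S_i` for the partial sums of `y` in that order. Abel summation turns the linear objective
`Σ_i a_i y_i` into `Σ_i (a_i - a_{i+1}) S_i`, a combination with nonnegative coefficients, while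
`F` is the same combination of `1 - e^{-S_i}`. Since `0 ≤ S_i ≤ 1` and `x ↦ 1 - e^{-x}` is
concave, `1 - e^{-S_i}` lies above the chord `(1 - 1/e) S_i`.
-/

/-- The function `F` from the paper. -/
noncomputable def F (n m : ℕ) (v : Fin n → Fin m → ℝ) (σ : Fin m → Equiv.Perm (Fin n))
    (y : Fin n → Fin m → ℝ) : ℝ :=
  ∑ j : Fin m, ∑ i : Fin n,
    (v (σ j i) j - if h : (i : ℕ) + 1 < n then v (σ j ⟨(i : ℕ) + 1, h⟩) j else 0) *
    (1 - Real.exp (-(∑ k ∈ Finset.Iic i, y (σ j k) j)))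

open Finset

theorem one_sub_inv_exp_one_mul_le_one_sub_exp_neg {x : ℝ} (h0 : 0 ≤ x) (h1 : x ≤ 1) :
    (1 - 1 / Real.exp 1) * x ≤ 1 - Real.exp (-x) := by
  have hconv := convexOn_exp.2 (Set.mem_univ (-1 : ℝ)) (Set.mem_univ (0 : ℝ))
    h0 (sub_nonneg.2 h1) (add_sub_cancel x 1)
  simp only [smul_eq_mul, mul_zero, mul_neg_one, add_zero, Real.exp_zero, mul_one,
    Real.exp_neg] at hconv
  rw [Real.exp_neg, one_div]
  linarith

theorem sum_range_sub_mul_sum_range_succ {R : Type*} [CommRing R] (a w : ℕ → R) (N : ℕ) :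
    ∑ i ∈ range N, (a i - a (i + 1)) * ∑ k ∈ range (i + 1), w k
      = ∑ i ∈ range N, a i * w i - a N * ∑ k ∈ range N, w k := by
  induction N with
  | zero => simp
  | succ N ih =>
    rw [sum_range_succ, ih, sum_range_succ w, sum_range_succ (fun i => a i * w i)]
    ring

theorem one_sub_inv_exp_one_mul_sum_le {a w : ℕ → ℝ} {N : ℕ} (ha : Antitone a) (haN : a N = 0)
    (hw : ∀ k < N, 0 ≤ w k) (hsum : ∑ k ∈ range N, w k ≤ 1) :
    (1 - 1 / Real.exp 1) * ∑ i ∈ range N, a i * w i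
      ≤ ∑ i ∈ range N, (a i - a (i + 1)) * (1 - Real.exp (-∑ k ∈ range (i + 1), w k)) := by
  have by_parts := sum_range_sub_mul_sum_range_succ a w N
  rw [haN, zero_mul, sub_zero] at by_parts
  rw [← by_parts, mul_sum]
  refine sum_le_sum fun i hi => ?_
  have hiN : i + 1 ≤ N := mem_range.1 hi
  have hpartial_nonneg : 0 ≤ ∑ k ∈ range (i + 1), w k :=
    sum_nonneg fun k hk => hw k (by simp only [mem_range] at hk; omega)
  have hpartial_le_one : ∑ k ∈ range (i + 1), w k ≤ 1 :=
    (sum_le_sum_of_subset_of_nonneg (range_subset_range.2 hiN)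
      fun k hk _ => hw k (mem_range.1 hk)).trans hsum
  calc (1 - 1 / Real.exp 1) * ((a i - a (i + 1)) * ∑ k ∈ range (i + 1), w k)
      = (a i - a (i + 1)) * ((1 - 1 / Real.exp 1) * ∑ k ∈ range (i + 1), w k) := by ring
    _ ≤ (a i - a (i + 1)) * (1 - Real.exp (-∑ k ∈ range (i + 1), w k)) :=
      mul_le_mul_of_nonneg_left
        (one_sub_inv_exp_one_mul_le_one_sub_exp_neg hpartial_nonneg hpartial_le_one)
        (sub_nonneg.2 (ha (Nat.le_succ i)))

namespace Fin

variable {n : ℕ} (f : Fin n → ℝ)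

def extendByZero (k : ℕ) : ℝ :=
  if h : k < n then f ⟨k, h⟩ else 0

@[simp]
theorem extendByZero_val (i : Fin n) : extendByZero f i = f i := by
  simp [extendByZero]

theorem extendByZero_of_le {k : ℕ} (hk : n ≤ k) : extendByZero f k = 0 := by
  simp [extendByZero, hk]

theorem extendByZero_succ (i : Fin n) :
    extendByZero f (i + 1) = if h : (i : ℕ) + 1 < n then f ⟨i + 1, h⟩ else 0 :=
  rfl

theorem extendByZero_nonneg (hf : ∀ i, 0 ≤ f i) (k : ℕ) : 0 ≤ extendByZero f k := by
  unfold extendByZero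
  split_ifs
  exacts [hf _, le_rfl]

theorem antitone_extendByZero (hf : Antitone f) (hf0 : ∀ i, 0 ≤ f i) :
    Antitone (extendByZero f) := by
  intro k l hkl
  by_cases hl : l < n
  · have hk : k < n := hkl.trans_lt hl
    simpa [extendByZero, hk, hl] using hf (show (⟨k, hk⟩ : Fin n) ≤ ⟨l, hl⟩ from hkl)
  · rw [extendByZero_of_le f (not_lt.1 hl)]
    exact extendByZero_nonneg f hf0 k

theorem sum_range_extendByZero : ∑ k ∈ range n, extendByZero f k = ∑ i, f i := by
  rw [← Fin.sum_univ_eq_sum_range]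
  simp

theorem sum_range_extendByZero_mul (g : Fin n → ℝ) :
    ∑ k ∈ range n, extendByZero f k * extendByZero g k = ∑ i, f i * g i := by
  rw [← Fin.sum_univ_eq_sum_range]
  simp

theorem sum_Iic_eq_sum_range_extendByZero (i : Fin n) :
    ∑ k ∈ Iic i, f k = ∑ k ∈ range (i + 1), extendByZero f k := by
  rw [Nat.range_succ_eq_Iic, ← Fin.map_valEmbedding_Iic, sum_map]
  simp

end Fin

theorem F_dominates_linear_general (n m : ℕ)
    (v : Fin n → Fin m → ℝ) (hv : ∀ i j, 0 ≤ v i j)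
    (σ : Fin m → Equiv.Perm (Fin n))
    (hσ : ∀ j, Antitone fun i => v (σ j i) j)
    (y : Fin n → Fin m → ℝ) (hy : ∀ i j, y i j ∈ Set.Icc (0 : ℝ) 1)
    (hcol : ∀ j, ∑ i : Fin n, y i j ≤ 1) :
    F n m v σ y ≥ (1 - 1 / Real.exp 1) * ∑ i : Fin n, ∑ j : Fin m, v i j * y i j := by
  unfold F
  rw [ge_iff_le, sum_comm, mul_sum]
  refine sum_le_sum fun j _ => ?_
  set a := Fin.extendByZero fun i => v (σ j i) j
  set w := Fin.extendByZero fun i => y (σ j i) j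
  have hlinear : ∑ i, v i j * y i j = ∑ i ∈ range n, a i * w i := by
    rw [Fin.sum_range_extendByZero_mul, Equiv.sum_comp (σ j) fun i => v i j * y i j]
  have hcolumn : ∑ i : Fin n,
      (v (σ j i) j - if h : (i : ℕ) + 1 < n then v (σ j ⟨(i : ℕ) + 1, h⟩) j else 0) *
        (1 - Real.exp (-(∑ k ∈ Iic i, y (σ j k) j)))
      = ∑ i ∈ range n, (a i - a (i + 1)) * (1 - Real.exp (-∑ k ∈ range (i + 1), w k)) := by
    rw [← Fin.sum_univ_eq_sum_range
      (fun i => (a i - a (i + 1)) * (1 - Real.exp (-∑ k ∈ range (i + 1), w k)))]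
    refine sum_congr rfl fun i _ => ?_
    rw [Fin.sum_Iic_eq_sum_range_extendByZero]
    simp only [a, w, Fin.extendByZero_val, Fin.extendByZero_succ]
  have hsum : ∑ k ∈ range n, w k ≤ 1 := by
    rw [Fin.sum_range_extendByZero, Equiv.sum_comp (σ j) fun i => y i j]
    exact hcol j
  rw [hlinear, hcolumn]
  exact one_sub_inv_exp_one_mul_sum_le
    (Fin.antitone_extendByZero _ (hσ j) fun i => hv _ j) (Fin.extendByZero_of_le _ le_rfl)
    (fun k _ => Fin.extendByZero_nonneg _ (fun i => (hy _ j).1) k) hsum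

/-- The second inequality in the proof of Lemma 3.3: on the polytope `P′`
(`y ∈ [0,1]^{I×J}` with `Σ_i y_{ij} ≤ 1` for each item `j`),
`F(y) ≥ (1 − 1/e)·Σ_{i,j} v_{ij} y_{ij}`. -/
theorem F_dominates_linear (n m : ℕ) (hn : 1 ≤ n) (hm : 1 ≤ m)
    (v : Fin n → Fin m → ℝ) (hv : ∀ i j, 0 ≤ v i j)
    (σ : Fin m → Equiv.Perm (Fin n))
    (hσ : ∀ j, Antitone fun i => v (σ j i) j)
    (y : Fin n → Fin m → ℝ) (hy : ∀ i j, y i j ∈ Set.Icc (0 : ℝ) 1)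
    (hcol : ∀ j, ∑ i : Fin n, y i j ≤ 1) :
    F n m v σ y ≥ (1 - 1 / Real.exp 1) * ∑ i : Fin n, ∑ j : Fin m, v i j * y i j :=
  F_dominates_linear_general n m v hv σ hσ y hy hcol
end

section
/- For any δ ≥ 0 and any y, y′ ∈ ℝ^{I×J} with ‖y − y′‖_∞ ≤ δ, and for all i ∈ I and j ∈ J, the gradient coordinates satisfy e^{−nδ}·(∇F(y))_{ij} ≤ (∇F(y′))_{ij} ≤ e^{nδ}·(∇F(y))_{ij}. (Lemma 3.8 of the paper.) -/
/-- The gradient of `F`: its coordinate at bin `a = σ_j(i)` and item `j` is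
`Σ_{l=i}^n (v_{σ_j(l),j} − v_{σ_j(l+1),j})·exp(−Σ_{k=1}^l y_{σ_j(k),j})`. -/
noncomputable def gradF (n m : ℕ) (v : Fin n → Fin m → ℝ) (σ : Fin m → Equiv.Perm (Fin n))
    (y : Fin n → Fin m → ℝ) (a : Fin n) (j : Fin m) : ℝ :=
  ∑ l ∈ Finset.Ici ((σ j).symm a),
    (v (σ j l) j - if h : (l : ℕ) + 1 < n then v (σ j ⟨(l : ℕ) + 1, h⟩) j else 0) *
    Real.exp (-(∑ k ∈ Finset.Iic l, y (σ j k) j))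

/-! Every gradient coordinate is a sum of terms `c_l · exp(−S_l(y))` with `c_l ≥ 0`, where
`S_l(y)` is a partial sum of at most `n` entries of `y`. Perturbing `y` by at most `δ` in each entry
moves each `S_l` by at most `nδ`, so each term, hence the sum, changes by a factor in
`[e^{−nδ}, e^{nδ}]`. -/

lemma Finset.sum_mul_exp_neg_le_exp_mul {ι : Type*} {s : Finset ι} {c a b : ι → ℝ} {D : ℝ}
    (hc : ∀ l ∈ s, 0 ≤ c l) (hab : ∀ l ∈ s, a l - b l ≤ D) :
    ∑ l ∈ s, c l * Real.exp (-b l) ≤ Real.exp D * ∑ l ∈ s, c l * Real.exp (-a l) := by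
  rw [Finset.mul_sum]
  refine Finset.sum_le_sum fun l hl => ?_
  calc c l * Real.exp (-b l) ≤ c l * Real.exp (D + -a l) := by
        gcongr
        · exact hc l hl
        · linarith [hab l hl]
    _ = Real.exp D * (c l * Real.exp (-a l)) := by rw [Real.exp_add]; ring

lemma Finset.sum_sub_sum_le_card_mul {ι : Type*} {s : Finset ι} {f g : ι → ℝ} {δ : ℝ}
    (hfg : ∀ k ∈ s, |f k - g k| ≤ δ) :
    ∑ k ∈ s, f k - ∑ k ∈ s, g k ≤ s.card * δ := by
  rw [← Finset.sum_sub_distrib, ← nsmul_eq_mul]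
  exact Finset.sum_le_card_nsmul _ _ _ fun k hk => (abs_le.mp (hfg k hk)).2

lemma Antitone.sub_next_nonneg {n : ℕ} {w : Fin n → ℝ} (hw : Antitone w) (hw0 : ∀ i, 0 ≤ w i)
    (l : Fin n) : 0 ≤ w l - if h : (l : ℕ) + 1 < n then w ⟨(l : ℕ) + 1, h⟩ else 0 := by
  split_ifs with h
  · exact sub_nonneg.mpr (hw (Fin.le_def.mpr (Nat.le_succ _)))
  · simpa using hw0 l

lemma gradF_le_exp_mul_gradF {n m : ℕ} {v : Fin n → Fin m → ℝ} {σ : Fin m → Equiv.Perm (Fin n)}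
    {δ : ℝ} {y y' : Fin n → Fin m → ℝ} {j : Fin m} (hv : ∀ i, 0 ≤ v i j)
    (hσ : Antitone fun i => v (σ j i) j) (hδ : 0 ≤ δ) (hyy' : ∀ i, |y i j - y' i j| ≤ δ)
    (a : Fin n) :
    gradF n m v σ y' a j ≤ Real.exp (n * δ) * gradF n m v σ y a j := by
  refine Finset.sum_mul_exp_neg_le_exp_mul (fun l _ => hσ.sub_next_nonneg (fun _ => hv _) l)
    fun l _ => ?_
  calc ∑ k ∈ Finset.Iic l, y (σ j k) j - ∑ k ∈ Finset.Iic l, y' (σ j k) j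
      ≤ (Finset.Iic l).card * δ := Finset.sum_sub_sum_le_card_mul fun k _ => hyy' (σ j k)
    _ ≤ n * δ := by
      gcongr
      exact (Finset.card_le_univ _).trans_eq (Fintype.card_fin n)

theorem gradF_change_general (n m : ℕ)
    (v : Fin n → Fin m → ℝ) (hv : ∀ i j, 0 ≤ v i j)
    (σ : Fin m → Equiv.Perm (Fin n))
    (hσ : ∀ j, Antitone fun i => v (σ j i) j)
    (δ : ℝ) (hδ : 0 ≤ δ)
    (y y' : Fin n → Fin m → ℝ) (hyy' : ∀ i j, |y i j - y' i j| ≤ δ) :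
    ∀ (i : Fin n) (j : Fin m),
      Real.exp (-(n * δ)) * gradF n m v σ y i j ≤ gradF n m v σ y' i j ∧
      gradF n m v σ y' i j ≤ Real.exp (n * δ) * gradF n m v σ y i j := by
  intro i j
  have hy'y : ∀ a, |y' a j - y a j| ≤ δ := fun a => (abs_sub_comm _ _).trans_le (hyy' a j)
  constructor
  · rw [Real.exp_neg, inv_mul_le_iff₀ (Real.exp_pos _)]
    exact gradF_le_exp_mul_gradF (hv · j) (hσ j) hδ hy'y i
  · exact gradF_le_exp_mul_gradF (hv · j) (hσ j) hδ (hyy' · j) i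

/-- Lemma 3.8: if `‖y − y′‖_∞ ≤ δ` then every gradient coordinate satisfies
`e^{−nδ}·(∇F(y))_{ij} ≤ (∇F(y′))_{ij} ≤ e^{nδ}·(∇F(y))_{ij}`. -/
theorem gradF_change (n m : ℕ) (hn : 1 ≤ n) (hm : 1 ≤ m)
    (v : Fin n → Fin m → ℝ) (hv : ∀ i j, 0 ≤ v i j)
    (σ : Fin m → Equiv.Perm (Fin n))
    (hσ : ∀ j, Antitone fun i => v (σ j i) j)
    (δ : ℝ) (hδ : 0 ≤ δ)
    (y y' : Fin n → Fin m → ℝ) (hyy' : ∀ i j, |y i j - y' i j| ≤ δ) :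
    ∀ (i : Fin n) (j : Fin m),
      Real.exp (-(n * δ)) * gradF n m v σ y i j ≤ gradF n m v σ y' i j ∧
      gradF n m v σ y' i j ≤ Real.exp (n * δ) * gradF n m v σ y i j :=
  gradF_change_general n m v hv σ hσ δ hδ y y' hyy'
end

section
/- Let 0 < ε < 1 and let M = max_{i∈I, j∈J} v_{ij}. Suppose y, z, y* ∈ [0,1]^{I×J} satisfy (z − y)·∇F(y) ≤ εM and z·∇F(y) ≥ (1 − ε)·(y*·∇F(y)). Then F(y) ≥ (1 − ε)·F(y*) − (ε/(1 − ε))·M. (The analytic core of the proof of Lemma 3.7: the local-search stopping condition implies near-optimality.) -/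
open Finset Real

theorem Real.exp_neg_sub_exp_neg_le (a b : ℝ) : exp (-a) - exp (-b) ≤ exp (-a) * (b - a) := by
  have hsplit : exp (-b) = exp (-a) * exp (a - b) := by rw [← exp_add]; ring_nf
  rw [hsplit, ← mul_one_sub]
  exact mul_le_mul_of_nonneg_left (by linarith [add_one_le_exp (a - b)]) (exp_pos _).le

section

variable {n m : ℕ} (v : Fin n → Fin m → ℝ) (σ : Fin m → Equiv.Perm (Fin n))

noncomputable def valueGap (j : Fin m) (l : Fin n) : ℝ :=
  v (σ j l) j - if h : (l : ℕ) + 1 < n then v (σ j ⟨(l : ℕ) + 1, h⟩) j else 0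

def prefixLoad (u : Fin n → Fin m → ℝ) (j : Fin m) (l : Fin n) : ℝ :=
  ∑ k ∈ Iic l, u (σ j k) j

theorem F_eq_sum_valueGap (u : Fin n → Fin m → ℝ) :
    F n m v σ u = ∑ j, ∑ l, valueGap v σ j l * (1 - exp (-prefixLoad σ u j l)) :=
  rfl

theorem valueGap_nonneg (hv : ∀ i j, 0 ≤ v i j) (hσ : ∀ j, Antitone fun i => v (σ j i) j)
    (j : Fin m) (l : Fin n) : 0 ≤ valueGap v σ j l := by
  unfold valueGap
  split_ifs with h
  · exact sub_nonneg.2 (hσ j (Fin.mk_le_mk.2 (Nat.le_succ l)))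
  · simpa using hv (σ j l) j

theorem sum_mul_gradF (y u : Fin n → Fin m → ℝ) :
    ∑ i, ∑ j, u i j * gradF n m v σ y i j =
      ∑ j, ∑ l, valueGap v σ j l * exp (-prefixLoad σ y j l) * prefixLoad σ u j l := by
  rw [sum_comm]
  refine sum_congr rfl fun j _ => ?_
  rw [← Equiv.sum_comp (σ j)]
  simp only [gradF, Equiv.symm_apply_apply, mul_sum, prefixLoad]
  rw [sum_comm' (t' := univ) (s' := fun l => Iic l) (by simp)]
  exact sum_congr rfl fun l _ => sum_congr rfl fun k _ => by simp only [valueGap]; ring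

theorem F_le_add_sum_mul_gradF (hv : ∀ i j, 0 ≤ v i j) (hσ : ∀ j, Antitone fun i => v (σ j i) j)
    (y u : Fin n → Fin m → ℝ) :
    F n m v σ u ≤ F n m v σ y + ∑ i, ∑ j, u i j * gradF n m v σ y i j
      - ∑ i, ∑ j, y i j * gradF n m v σ y i j := by
  rw [sum_mul_gradF, sum_mul_gradF, F_eq_sum_valueGap, F_eq_sum_valueGap, ← sub_nonneg]
  simp only [← sum_add_distrib, ← sum_sub_distrib]
  refine sum_nonneg fun j _ => sum_nonneg fun l _ => ?_
  have := mul_le_mul_of_nonneg_left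
    (exp_neg_sub_exp_neg_le (prefixLoad σ y j l) (prefixLoad σ u j l)) (valueGap_nonneg v σ hv hσ j l)
  linarith

theorem F_zero : F n m v σ 0 = 0 := by
  simp [F_eq_sum_valueGap, prefixLoad]

theorem sum_mul_gradF_self_le_F (hv : ∀ i j, 0 ≤ v i j) (hσ : ∀ j, Antitone fun i => v (σ j i) j)
    (y : Fin n → Fin m → ℝ) : ∑ i, ∑ j, y i j * gradF n m v σ y i j ≤ F n m v σ y := by
  have := F_le_add_sum_mul_gradF v σ hv hσ y 0
  simp only [F_zero, Pi.zero_apply, zero_mul, sum_const_zero] at this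
  linarith

end

theorem local_search_near_optimal_general (n m : ℕ)
    (v : Fin n → Fin m → ℝ) (hv : ∀ i j, 0 ≤ v i j)
    (σ : Fin m → Equiv.Perm (Fin n))
    (hσ : ∀ j, Antitone fun i => v (σ j i) j)
    (M : ℝ) (hM : IsGreatest {t : ℝ | ∃ i j, t = v i j} M)
    (ε : ℝ) (hε0 : 0 < ε) (hε1 : ε < 1)
    (y z ystar : Fin n → Fin m → ℝ)
    (hstop : ∑ i : Fin n, ∑ j : Fin m, (z i j - y i j) * gradF n m v σ y i j ≤ ε * M)
    (happrox : ∑ i : Fin n, ∑ j : Fin m, z i j * gradF n m v σ y i j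
      ≥ (1 - ε) * ∑ i : Fin n, ∑ j : Fin m, ystar i j * gradF n m v σ y i j) :
    F n m v σ y ≥ (1 - ε) * F n m v σ ystar - (ε / (1 - ε)) * M := by
  obtain ⟨⟨i, j, rfl⟩, -⟩ := hM
  have hstop' : ∑ i, ∑ j, z i j * gradF n m v σ y i j
      - ∑ i, ∑ j, y i j * gradF n m v σ y i j ≤ ε * v i j := by
    simpa only [sub_mul, sum_sub_distrib] using hstop
  have hconcave := F_le_add_sum_mul_gradF v σ hv hσ y ystar
  have hself := sum_mul_gradF_self_le_F v σ hv hσ y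
  have hεM : ε * v i j ≤ ε / (1 - ε) * v i j := by
    refine mul_le_mul_of_nonneg_right ?_ (hv i j)
    rw [le_div_iff₀ (by linarith)]
    nlinarith
  nlinarith [mul_le_mul_of_nonneg_left hconcave (sub_nonneg.2 hε1.le),
    mul_le_mul_of_nonneg_left hself hε0.le]

/-- The analytic core of the proof of Lemma 3.7: if `y, z, y* ∈ [0,1]^{I×J}` satisfy the
local-search stopping condition `(z − y)·∇F(y) ≤ εM` and the approximate linear-maximization
guarantee `z·∇F(y) ≥ (1 − ε)·(y*·∇F(y))`, then `F(y) ≥ (1 − ε)F(y*) − (ε/(1 − ε))M`. -/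
theorem local_search_near_optimal (n m : ℕ) (hn : 1 ≤ n) (hm : 1 ≤ m)
    (v : Fin n → Fin m → ℝ) (hv : ∀ i j, 0 ≤ v i j)
    (σ : Fin m → Equiv.Perm (Fin n))
    (hσ : ∀ j, Antitone fun i => v (σ j i) j)
    (M : ℝ) (hM : IsGreatest {t : ℝ | ∃ i j, t = v i j} M)
    (ε : ℝ) (hε0 : 0 < ε) (hε1 : ε < 1)
    (y z ystar : Fin n → Fin m → ℝ)
    (hy : ∀ i j, y i j ∈ Set.Icc (0 : ℝ) 1)
    (hz : ∀ i j, z i j ∈ Set.Icc (0 : ℝ) 1)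
    (hystar : ∀ i j, ystar i j ∈ Set.Icc (0 : ℝ) 1)
    (hstop : ∑ i : Fin n, ∑ j : Fin m, (z i j - y i j) * gradF n m v σ y i j ≤ ε * M)
    (happrox : ∑ i : Fin n, ∑ j : Fin m, z i j * gradF n m v σ y i j
      ≥ (1 - ε) * ∑ i : Fin n, ∑ j : Fin m, ystar i j * gradF n m v σ y i j) :
    F n m v σ y ≥ (1 - ε) * F n m v σ ystar - (ε / (1 - ε)) * M :=
  local_search_near_optimal_general n m v hv σ hσ M hM ε hε0 hε1 y z ystar hstop happrox
end
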